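/- For every fixed x in (0,1), the function p ↦ ((1+x)/2)^{2-p} − ((1-x)/2)^{2-p} + x·((3-x^2)/2)^{-p/2} is strictly concave and decreasing on [0,2]. -/

import Mathlib

/-!
With `a = (1 + x) / 2`, `b = (1 - x) / 2`, `c = (3 - x²) / 2` the function is
`F p = a ^ (2 - p) - b ^ (2 - p) + x c ^ (-p / 2)`, whose second derivative is
`(log a)² a ^ (2 - p) - (log b)² b ^ (2 - p) + x (log c)² / 4 · c ^ (-p / 2)`.
Since `b ^ (-p) ≥ a ^ (-p) ≥ 1 ≥ c ^ (-p / 2)` for `p ≥ 0`, pulling out `a ^ (-p)` shows that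
`F'' < 0` on `[0, 2]` follows from its case `p = 0`, namely `(a log a)² + x (log c)² / 4 < (b log b)²`.
Bounding `log c < c - 1 = 2ab` turns this into an inequality in `b` alone, proved by tangent-line
bounds on the logarithm for `b ≤ 1/4` and by a second-derivative argument on `[1/4, 1/2]`.
So `F'` is strictly decreasing, and `F` is strictly decreasing as soon as `F' 0 = -ψ(x) / 2 ≤ 0`.
Finally `ψ` vanishes at `0` and `1`, is concave on `[0, 4/5]` and decreasing on `[4/5, 1]`.
-/

open Real Set

section Calculus

variable {f f' f'' : ℝ → ℝ} {l r : ℝ}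

lemma antitoneOn_Icc_of_hasDerivAt (hf : ContinuousOn f (Icc l r))
    (hf' : ∀ y ∈ Ioo l r, HasDerivAt f (f' y) y) (hneg : ∀ y ∈ Ioo l r, f' y ≤ 0) :
    AntitoneOn f (Icc l r) :=
  antitoneOn_of_hasDerivWithinAt_nonpos (convex_Icc l r) hf
    (by simpa using fun y hy => (hf' y hy).hasDerivWithinAt) (by simpa using hneg)

lemma strictAntiOn_Icc_of_hasDerivAt (hf : ContinuousOn f (Icc l r))
    (hf' : ∀ y ∈ Ioo l r, HasDerivAt f (f' y) y) (hneg : ∀ y ∈ Ioo l r, f' y < 0) :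
    StrictAntiOn f (Icc l r) :=
  strictAntiOn_of_hasDerivWithinAt_neg (convex_Icc l r) hf
    (by simpa using fun y hy => (hf' y hy).hasDerivWithinAt) (by simpa using hneg)

lemma concaveOn_Icc_of_hasDerivAt (hf : ContinuousOn f (Icc l r))
    (hf' : ∀ y ∈ Ioo l r, HasDerivAt f (f' y) y) (hf'' : ∀ y ∈ Ioo l r, HasDerivAt f' (f'' y) y)
    (hneg : ∀ y ∈ Ioo l r, f'' y ≤ 0) : ConcaveOn ℝ (Icc l r) f :=
  concaveOn_of_hasDerivWithinAt2_nonpos (convex_Icc l r) hf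
    (by simpa using fun y hy => (hf' y hy).hasDerivWithinAt)
    (by simpa using fun y hy => (hf'' y hy).hasDerivWithinAt) (by simpa using hneg)

lemma strictConcaveOn_and_strictAntiOn_Icc_of_hasDerivAt (hf : ∀ p, HasDerivAt f (f' p) p)
    (hf' : ∀ p, HasDerivAt f' (f'' p) p) (hneg : ∀ p ∈ Ioo l r, f'' p < 0) (hl : f' l ≤ 0) :
    StrictConcaveOn ℝ (Icc l r) f ∧ StrictAntiOn f (Icc l r) := by
  have hderiv : deriv f = f' := funext fun p => (hf p).deriv
  have hcont : ContinuousOn f (Icc l r) := fun p _ => (hf p).continuousAt.continuousWithinAt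
  have hanti' : StrictAntiOn f' (Icc l r) := strictAntiOn_Icc_of_hasDerivAt
    (fun p _ => (hf' p).continuousAt.continuousWithinAt) (fun p _ => hf' p) hneg
  refine ⟨StrictAntiOn.strictConcaveOn_of_deriv (convex_Icc l r) hcont ?_,
    strictAntiOn_Icc_of_hasDerivAt hcont (fun p _ => hf p) fun p hp => ?_⟩
  · rw [hderiv, interior_Icc]
    exact hanti'.mono Ioo_subset_Icc_self
  · have hlr : l ≤ r := hp.1.le.trans hp.2.le
    exact (hanti' (left_mem_Icc.2 hlr) (Ioo_subset_Icc_self hp) hp.1).trans_le hl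

end Calculus

/-- The function of the theorem is `expSum ((1 + x) / 2) ((1 - x) / 2) ((3 - x ^ 2) / 2) 1 1 x`,
and the family is closed under differentiation in `p`. -/
noncomputable def expSum (a b c A B C p : ℝ) : ℝ :=
  A * a ^ (2 - p) - B * b ^ (2 - p) + C * c ^ (-p / 2)

section ExpSum

variable {a b c A B C : ℝ}

lemma hasDerivAt_expSum (ha : 0 < a) (hb : 0 < b) (hc : 0 < c) (p : ℝ) :
    HasDerivAt (expSum a b c A B C)
      (expSum a b c (-log a * A) (-log b * B) (-log c / 2 * C) p) p := by
  have hsub := (hasDerivAt_id' p).const_sub 2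
  have hhalf := (hasDerivAt_id' p).fun_neg.div_const 2
  refine ((((hsub.const_rpow ha).const_mul A).fun_sub
    ((hsub.const_rpow hb).const_mul B)).fun_add ((hhalf.const_rpow hc).const_mul C)).congr_deriv ?_
  rw [expSum]
  ring

lemma expSum_zero : expSum a b c A B C 0 = A * a ^ 2 - B * b ^ 2 + C := by
  norm_num [expSum]

lemma expSum_neg {p : ℝ} (hb : 0 < b) (hba : b ≤ a) (ha : a ≤ 1) (hc : 1 ≤ c) (hA : 0 ≤ A)
    (hC : 0 ≤ C) (hp : 0 ≤ p) (h : A * a ^ 2 + C < B * b ^ 2) : expSum a b c A B C p < 0 := by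
  have ha0 : 0 < a := hb.trans_le hba
  have hpow : ∀ t : ℝ, 0 < t → t ^ (2 - p) = t ^ 2 * t ^ (-p) := fun t ht => by
    rw [sub_eq_add_neg, rpow_add ht, rpow_two]
  have ha1 : 1 ≤ a ^ (-p) := one_le_rpow_of_pos_of_le_one_of_nonpos ha0 ha (by linarith)
  have hab : a ^ (-p) ≤ b ^ (-p) := rpow_le_rpow_of_nonpos hb hba (by linarith)
  have hc1 : c ^ (-p / 2) ≤ 1 := rpow_le_one_of_one_le_of_nonpos hc (by linarith)
  have hB : 0 ≤ B * b ^ 2 := by nlinarith [sq_nonneg a]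
  rw [expSum, hpow a ha0, hpow b hb]
  calc A * (a ^ 2 * a ^ (-p)) - B * (b ^ 2 * b ^ (-p)) + C * c ^ (-p / 2)
      ≤ (A * a ^ 2 + C) * a ^ (-p) - B * b ^ 2 * b ^ (-p) := by nlinarith
    _ < B * b ^ 2 * a ^ (-p) - B * b ^ 2 * b ^ (-p) := by gcongr
    _ ≤ 0 := by nlinarith

end ExpSum

lemma sq_mul_log_le_sq_one_sub {t : ℝ} (ht0 : 0 < t) (ht1 : t ≤ 1) :
    (t * log t) ^ 2 ≤ (1 - t) ^ 2 := by
  have hlog : 1 - t⁻¹ ≤ log t := one_sub_inv_le_log_of_pos ht0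
  have hmul : t - 1 ≤ t * log t := by
    have := mul_le_mul_of_nonneg_left hlog ht0.le
    rwa [mul_sub, mul_one, mul_inv_cancel₀ ht0.ne'] at this
  have hnonpos : t * log t ≤ 0 := mul_nonpos_of_nonneg_of_nonpos ht0.le (log_nonpos ht0.le ht1)
  nlinarith

lemma one_add_sq_one_sub_le_log_sq {b : ℝ} (hb0 : 0 < b) (hb : b ≤ 1 / 4) :
    1 + (1 - b) ^ 2 ≤ log b ^ 2 := by
  have htangent : log (4 * b) ≤ 4 * b - 1 := log_le_sub_one_of_pos (by positivity)
  rw [log_mul (by norm_num) hb0.ne', show (4 : ℝ) = 2 ^ 2 by norm_num, log_pow] at htangent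
  push_cast at htangent
  have hlog2 := log_two_gt_d9
  have hm : 0 ≤ 2 * log 2 + 1 - 4 * b := by linarith
  have hsq := mul_self_le_mul_self hm (show 2 * log 2 + 1 - 4 * b ≤ -log b by linarith)
  nlinarith

lemma hasDerivAt_mul_log_sq {t : ℝ} (ht : 0 < t) :
    HasDerivAt (fun s => (s * log s) ^ 2) (2 * (t * log t) * (log t + 1)) t := by
  simpa using (hasDerivAt_mul_log ht.ne').fun_pow 2

lemma hasDerivAt_two_mul_mul_log_mul {t : ℝ} (ht : 0 < t) :
    HasDerivAt (fun s => 2 * (s * log s) * (log s + 1)) (2 * (log t + 1) ^ 2 + 2 * log t) t := by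
  refine (((hasDerivAt_mul_log ht.ne').const_mul 2).fun_mul
    ((hasDerivAt_log ht.ne').add_const 1)).congr_deriv ?_
  field_simp

/-- With `a = 1 - b` and `x = 1 - 2b`, the last term is `x (ab)²`, the bound for `x (log c)² / 4`
given by `log c < c - 1 = 2ab`. -/
noncomputable def mulLogSqGap (b : ℝ) : ℝ :=
  (b * log b) ^ 2 - ((1 - b) * log (1 - b)) ^ 2 - (1 - 2 * b) * (b * (1 - b)) ^ 2

noncomputable def mulLogSqGap' (b : ℝ) : ℝ :=
  2 * (b * log b) * (log b + 1) + 2 * ((1 - b) * log (1 - b)) * (log (1 - b) + 1)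
    - (2 * b - 12 * b ^ 2 + 20 * b ^ 3 - 10 * b ^ 4)

noncomputable def mulLogSqGap'' (b : ℝ) : ℝ :=
  2 * (log b + 1) ^ 2 + 2 * log b - (2 * (log (1 - b) + 1) ^ 2 + 2 * log (1 - b))
    - 2 * (1 - 2 * b) * (1 - 10 * b + 10 * b ^ 2)

section MulLogSqGap

variable {b : ℝ}

lemma hasDerivAt_mulLogSqGap (hb : b ∈ Ioo (0 : ℝ) 1) :
    HasDerivAt mulLogSqGap (mulLogSqGap' b) b := by
  have hrefl := (hasDerivAt_mul_log_sq (sub_pos.2 hb.2)).comp b ((hasDerivAt_id' b).const_sub 1)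
  have hpoly : HasDerivAt (fun t => (1 - 2 * t) * (t * (1 - t)) ^ 2)
      (2 * b - 12 * b ^ 2 + 20 * b ^ 3 - 10 * b ^ 4) b := by
    refine (((hasDerivAt_id' b).const_mul 2 |>.const_sub 1).fun_mul
      (((hasDerivAt_id' b).fun_mul ((hasDerivAt_id' b).const_sub 1)).fun_pow 2)).congr_deriv ?_
    ring
  refine (((hasDerivAt_mul_log_sq hb.1).fun_sub hrefl).fun_sub hpoly).congr_deriv ?_
  simp only [mulLogSqGap']
  ring

lemma hasDerivAt_mulLogSqGap' (hb : b ∈ Ioo (0 : ℝ) 1) :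
    HasDerivAt mulLogSqGap' (mulLogSqGap'' b) b := by
  have hrefl := (hasDerivAt_two_mul_mul_log_mul (sub_pos.2 hb.2)).comp b
    ((hasDerivAt_id' b).const_sub 1)
  have hpoly : HasDerivAt (fun t => 2 * t - 12 * t ^ 2 + 20 * t ^ 3 - 10 * t ^ 4)
      (2 * (1 - 2 * b) * (1 - 10 * b + 10 * b ^ 2)) b := by
    refine (((((hasDerivAt_id' b).const_mul 2).fun_sub ((hasDerivAt_pow 2 b).const_mul 12)).fun_add
      ((hasDerivAt_pow 3 b).const_mul 20)).fun_sub ((hasDerivAt_pow 4 b).const_mul 10)).congr_deriv ?_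
    push_cast
    ring
  refine (((hasDerivAt_two_mul_mul_log_mul hb.1).fun_add hrefl).fun_sub hpoly).congr_deriv ?_
  simp only [mulLogSqGap'']
  ring

lemma mulLogSqGap''_neg (hb : b ∈ Ioo (1 / 4 : ℝ) (1 / 2)) : mulLogSqGap'' b < 0 := by
  obtain ⟨hb4, hb2⟩ := hb
  have hb0 : 0 < b := by linarith
  have hb1 : 0 < 1 - b := by linarith
  have hdiff : (log b - log (1 - b)) * (1 - b) ≤ 2 * b - 1 := by
    have h := log_le_sub_one_of_pos (div_pos hb0 hb1)
    rw [log_div hb0.ne' hb1.ne'] at h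
    calc (log b - log (1 - b)) * (1 - b) ≤ (b / (1 - b) - 1) * (1 - b) :=
          mul_le_mul_of_nonneg_right h hb1.le
      _ = 2 * b - 1 := by field_simp; ring
  have hsum : 6 / 5 ≤ log b + log (1 - b) + 3 := by
    have hprod : log (3 / 16) ≤ log (b * (1 - b)) := log_le_log (by norm_num) (by nlinarith)
    rw [log_mul hb0.ne' hb1.ne', log_div (by norm_num) (by norm_num),
      show (16 : ℝ) = 2 ^ 4 by norm_num, log_pow] at hprod
    push_cast at hprod
    linarith [log_two_lt_d9, log_three_gt_d9]
  have hpoly : -6 / 7 ≤ (1 - b) * (1 - 10 * b + 10 * b ^ 2) := by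
    nlinarith [mul_nonneg (sq_nonneg (b - 2 / 5)) hb1.le]
  have hident : (1 - b) * mulLogSqGap'' b
      = 2 * ((log b - log (1 - b)) * (1 - b)) * (log b + log (1 - b) + 3)
        - 2 * (1 - 2 * b) * ((1 - b) * (1 - 10 * b + 10 * b ^ 2)) := by
    simp only [mulLogSqGap'']
    ring
  have hneg : (1 - b) * mulLogSqGap'' b < 0 := by
    rw [hident]
    nlinarith [mul_le_mul_of_nonneg_right hdiff (show 0 ≤ log b + log (1 - b) + 3 by linarith)]
  exact neg_of_mul_neg_right hneg hb1.le

lemma mulLogSqGap'_quarter_neg : mulLogSqGap' (1 / 4) < 0 := by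
  have hquarter : log (1 / 4 : ℝ) = -(2 * log 2) := by
    rw [one_div, log_inv, show (4 : ℝ) = 2 ^ 2 by norm_num, log_pow]
    push_cast
    ring
  have hthreeQuarters : log (1 - 1 / 4 : ℝ) = log 3 - 2 * log 2 := by
    rw [show (1 - 1 / 4 : ℝ) = 3 / 2 ^ 2 by norm_num, log_div (by norm_num) (by norm_num), log_pow]
    push_cast
    ring
  simp only [mulLogSqGap', hquarter, hthreeQuarters]
  nlinarith [log_two_gt_d9, log_two_lt_d9, log_three_gt_d9, log_three_lt_d9]

lemma mulLogSqGap_half : mulLogSqGap (1 / 2) = 0 := by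
  norm_num [mulLogSqGap]

lemma mulLogSqGap_nonneg (hb : b ∈ Icc (1 / 4 : ℝ) (1 / 2)) : 0 ≤ mulLogSqGap b := by
  have hIoo : ∀ t ∈ Ioo (1 / 4 : ℝ) (1 / 2), t ∈ Ioo (0 : ℝ) 1 :=
    fun t ht => ⟨by linarith [ht.1], by linarith [ht.2]⟩
  have hIcc : ∀ t ∈ Icc (1 / 4 : ℝ) (1 / 2), t ∈ Ioo (0 : ℝ) 1 :=
    fun t ht => ⟨by linarith [ht.1], by linarith [ht.2]⟩
  have hanti' : StrictAntiOn mulLogSqGap' (Icc (1 / 4) (1 / 2)) :=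
    strictAntiOn_Icc_of_hasDerivAt
      (fun t ht => (hasDerivAt_mulLogSqGap' (hIcc t ht)).continuousAt.continuousWithinAt)
      (fun t ht => hasDerivAt_mulLogSqGap' (hIoo t ht)) fun t ht => mulLogSqGap''_neg ht
  have hanti : AntitoneOn mulLogSqGap (Icc (1 / 4) (1 / 2)) :=
    antitoneOn_Icc_of_hasDerivAt
      (fun t ht => (hasDerivAt_mulLogSqGap (hIcc t ht)).continuousAt.continuousWithinAt)
      (fun t ht => hasDerivAt_mulLogSqGap (hIoo t ht)) fun t ht =>
        ((hanti' (left_mem_Icc.2 (by norm_num)) (Ioo_subset_Icc_self ht) ht.1).trans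
          mulLogSqGap'_quarter_neg).le
  have := hanti hb (right_mem_Icc.2 (by norm_num)) hb.2
  rwa [mulLogSqGap_half] at this

lemma sq_mul_log_one_sub_add_le (hb0 : 0 < b) (hb : b ≤ 1 / 2) :
    ((1 - b) * log (1 - b)) ^ 2 + (1 - 2 * b) * (b * (1 - b)) ^ 2 ≤ (b * log b) ^ 2 := by
  rcases le_or_gt b (1 / 4) with hb4 | hb4
  · have hlog := one_add_sq_one_sub_le_log_sq hb0 hb4
    have hrefl := sq_mul_log_le_sq_one_sub (show 0 < 1 - b by linarith) (by linarith)
    rw [sub_sub_cancel] at hrefl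
    nlinarith [mul_le_mul_of_nonneg_left hlog (sq_nonneg b), sq_nonneg (b * (1 - b))]
  · have := mulLogSqGap_nonneg ⟨hb4.le, hb⟩
    rw [mulLogSqGap] at this
    linarith

end MulLogSqGap

lemma log_sq_mul_sq_add_lt {x : ℝ} (hx0 : 0 < x) (hx1 : x < 1) :
    log ((1 + x) / 2) ^ 2 * ((1 + x) / 2) ^ 2 + x * log ((3 - x ^ 2) / 2) ^ 2 / 4
      < log ((1 - x) / 2) ^ 2 * ((1 - x) / 2) ^ 2 := by
  set b := (1 - x) / 2 with hb
  have ha : (1 + x) / 2 = 1 - b := by rw [hb]; ring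
  have hx : x = 1 - 2 * b := by rw [hb]; ring
  have hc : (3 - x ^ 2) / 2 = 1 + 2 * (b * (1 - b)) := by rw [hb]; ring
  have hb0 : 0 < b := by rw [hb]; linarith
  have hb1 : b < 1 / 2 := by rw [hb]; linarith
  have hab : 0 < b * (1 - b) := by nlinarith
  have hlogc : 0 < log (1 + 2 * (b * (1 - b))) := log_pos (by linarith)
  have hlogc' : log (1 + 2 * (b * (1 - b))) < 2 * (b * (1 - b)) := by
    linarith [log_lt_sub_one_of_pos (show 0 < 1 + 2 * (b * (1 - b)) by linarith) (by linarith)]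
  have hkey := sq_mul_log_one_sub_add_le hb0 hb1.le
  rw [ha, hc]
  nth_rewrite 1 [hx]
  have hsq : log (1 + 2 * (b * (1 - b))) ^ 2 < (2 * (b * (1 - b))) ^ 2 := by gcongr
  nlinarith [mul_lt_mul_of_pos_left hsq (show 0 < 1 - 2 * b by linarith)]

/-- `-psi x / 2` is the derivative at `p = 0` of the function of the theorem. -/
noncomputable def psi (y : ℝ) : ℝ :=
  (1 + y) ^ 2 / 2 * log ((1 + y) / 2) - (1 - y) ^ 2 / 2 * log ((1 - y) / 2)
    + y * log ((3 - y ^ 2) / 2)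

noncomputable def psi' (y : ℝ) : ℝ :=
  log ((3 - y ^ 2) / 2) + 3 * (1 - y ^ 2) / (3 - y ^ 2)
    + (1 + y) * log ((1 + y) / 2) + (1 - y) * log ((1 - y) / 2)

noncomputable def psi'' (y : ℝ) : ℝ :=
  log ((1 + y) / 2) - log ((1 - y) / 2) - 2 * y * (9 - y ^ 2) / (3 - y ^ 2) ^ 2

noncomputable def psi''' (y : ℝ) : ℝ :=
  2 / (1 - y ^ 2) - (54 + 36 * y ^ 2 - 2 * y ^ 4) / (3 - y ^ 2) ^ 3

section Psi

variable {y : ℝ}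

lemma hasDerivAt_log_one_add_div_two (hy : -1 < y) :
    HasDerivAt (fun t => log ((1 + t) / 2)) (1 / (1 + y)) y := by
  refine (((hasDerivAt_id' y).const_add 1).div_const 2 |>.log (by linarith)).congr_deriv ?_
  field_simp

lemma hasDerivAt_log_one_sub_div_two (hy : y < 1) :
    HasDerivAt (fun t => log ((1 - t) / 2)) (-(1 / (1 - y))) y := by
  refine (((hasDerivAt_id' y).const_sub 1).div_const 2 |>.log (by linarith)).congr_deriv ?_
  field_simp

lemma hasDerivAt_log_three_sub_sq_div_two (hy : y ^ 2 < 3) :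
    HasDerivAt (fun t => log ((3 - t ^ 2) / 2)) (-(2 * y) / (3 - y ^ 2)) y := by
  refine (((hasDerivAt_pow 2 y).const_sub 3).div_const 2 |>.log (by linarith)).congr_deriv ?_
  field_simp
  ring

lemma hasDerivAt_psi (hy : y ∈ Ioo (-1 : ℝ) 1) : HasDerivAt psi (psi' y) y := by
  obtain ⟨hy1, hy2⟩ := hy
  have hy3 : y ^ 2 < 3 := by nlinarith
  have hp := ((((hasDerivAt_id' y).const_add 1).fun_pow 2).div_const 2).fun_mul
    (hasDerivAt_log_one_add_div_two hy1)
  have hm := ((((hasDerivAt_id' y).const_sub 1).fun_pow 2).div_const 2).fun_mul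
    (hasDerivAt_log_one_sub_div_two hy2)
  have hc := (hasDerivAt_id' y).fun_mul (hasDerivAt_log_three_sub_sq_div_two hy3)
  refine ((hp.fun_sub hm).fun_add hc).congr_deriv ?_
  have : 1 + y ≠ 0 := by linarith
  have : 1 - y ≠ 0 := by linarith
  have : 3 - y ^ 2 ≠ 0 := by linarith
  simp only [psi']
  field_simp
  ring

lemma hasDerivAt_psi' (hy : y ∈ Ioo (-1 : ℝ) 1) : HasDerivAt psi' (psi'' y) y := by
  obtain ⟨hy1, hy2⟩ := hy
  have hy3 : y ^ 2 < 3 := by nlinarith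
  have hq := (((hasDerivAt_pow 2 y).const_sub 1).const_mul 3).fun_div
    ((hasDerivAt_pow 2 y).const_sub 3) (by linarith)
  have hp := ((hasDerivAt_id' y).const_add 1).fun_mul (hasDerivAt_log_one_add_div_two hy1)
  have hm := ((hasDerivAt_id' y).const_sub 1).fun_mul (hasDerivAt_log_one_sub_div_two hy2)
  refine ((((hasDerivAt_log_three_sub_sq_div_two hy3).fun_add hq).fun_add hp).fun_add
    hm).congr_deriv ?_
  have : 1 + y ≠ 0 := by linarith
  have : 1 - y ≠ 0 := by linarith
  have : 3 - y ^ 2 ≠ 0 := by linarith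
  simp only [psi'']
  field_simp
  ring

lemma hasDerivAt_psi'' (hy : y ∈ Ioo (-1 : ℝ) 1) : HasDerivAt psi'' (psi''' y) y := by
  obtain ⟨hy1, hy2⟩ := hy
  have hy3 : y ^ 2 < 3 := by nlinarith
  have hq := ((((hasDerivAt_id' y).const_mul 2).fun_mul ((hasDerivAt_pow 2 y).const_sub 9)).fun_div
    (((hasDerivAt_pow 2 y).const_sub 3).fun_pow 2) (by positivity))
  refine (((hasDerivAt_log_one_add_div_two hy1).fun_sub
    (hasDerivAt_log_one_sub_div_two hy2)).fun_sub hq).congr_deriv ?_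
  have : 1 + y ≠ 0 := by linarith
  have : 1 - y ≠ 0 := by linarith
  have : 1 - y ^ 2 ≠ 0 := by nlinarith
  have : 3 - y ^ 2 ≠ 0 := by linarith
  simp only [psi''']
  field_simp
  ring

lemma psi'''_nonpos (hy : y ∈ Ioo (0 : ℝ) (4 / 5)) : psi''' y ≤ 0 := by
  obtain ⟨hy0, hy1⟩ := hy
  have h1 : 0 < 1 - y ^ 2 := by nlinarith
  have h3 : 0 < 3 - y ^ 2 := by nlinarith
  have hquartic : 0 ≤ 9 - 14 * y ^ 2 + y ^ 4 := by nlinarith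
  rw [psi''', sub_nonpos, div_le_div_iff₀ h1 (by positivity)]
  nlinarith [mul_nonneg (sq_nonneg y) hquartic]

lemma psi''_nonpos (hy : y ∈ Icc (0 : ℝ) (4 / 5)) : psi'' y ≤ 0 := by
  have hIoo : ∀ t ∈ Icc (0 : ℝ) (4 / 5), t ∈ Ioo (-1 : ℝ) 1 :=
    fun t ht => ⟨by linarith [ht.1], by linarith [ht.2]⟩
  have hanti : AntitoneOn psi'' (Icc 0 (4 / 5)) :=
    antitoneOn_Icc_of_hasDerivAt
      (fun t ht => (hasDerivAt_psi'' (hIoo t ht)).continuousAt.continuousWithinAt)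
      (fun t ht => hasDerivAt_psi'' (hIoo t (Ioo_subset_Icc_self ht))) fun t ht => psi'''_nonpos ht
  have := hanti (left_mem_Icc.2 (by norm_num)) hy hy.1
  rwa [show psi'' 0 = 0 by norm_num [psi'']] at this

lemma three_mul_one_sub_le_mul_neg_log {b : ℝ} (hb0 : 0 < b) (hb : b ≤ 1 / 10) :
    3 * (1 - b) ≤ (1 + 2 * (b * (1 - b))) * -log b := by
  have htangent : log (10 * b) ≤ 10 * b - 1 := log_le_sub_one_of_pos (by positivity)
  rw [log_mul (by norm_num) hb0.ne'] at htangent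
  have hlog10 : 2.3025 < log 10 := by
    rw [log_ten_eq]
    linarith [log_two_gt_d9, log_five_gt_d9]
  have hq : 0 ≤ 1 + 2 * (b * (1 - b)) := by nlinarith
  nlinarith [mul_le_mul_of_nonneg_left (show log 10 + 1 - 10 * b ≤ -log b by linarith) hq,
    mul_nonneg hb0.le (show 0 ≤ 1 / 10 - b by linarith)]

lemma psi'_nonpos (hy : y ∈ Ioo (4 / 5 : ℝ) 1) : psi' y ≤ 0 := by
  obtain ⟨hy0, hy1⟩ := hy
  set b := (1 - y) / 2 with hb
  have hb0 : 0 < b := by rw [hb]; linarith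
  have hb10 : b ≤ 1 / 10 := by rw [hb]; linarith
  have ha : (1 + y) / 2 = 1 - b := by rw [hb]; ring
  have hc : (3 - y ^ 2) / 2 = 1 + 2 * (b * (1 - b)) := by rw [hb]; ring
  have hlogc : log ((3 - y ^ 2) / 2) ≤ 2 * (b * (1 - b)) := by
    rw [hc]
    linarith [log_le_sub_one_of_pos (show 0 < 1 + 2 * (b * (1 - b)) by nlinarith)]
  have hloga : (1 + y) * log ((1 + y) / 2) ≤ -2 * (b * (1 - b)) := by
    rw [ha]
    nlinarith [log_le_sub_one_of_pos (show 0 < 1 - b by linarith)]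
  have hrat : 3 * (1 - y ^ 2) / (3 - y ^ 2) = 6 * (b * (1 - b)) / (1 + 2 * (b * (1 - b))) := by
    rw [div_eq_div_iff (by nlinarith) (by nlinarith), hb]
    ring
  have hratLe : 6 * (b * (1 - b)) / (1 + 2 * (b * (1 - b))) ≤ 2 * b * -log b := by
    rw [div_le_iff₀ (by nlinarith)]
    nlinarith [three_mul_one_sub_le_mul_neg_log hb0 hb10]
  have hlogb : (1 - y) * log ((1 - y) / 2) = 2 * b * log b := by rw [hb]; ring
  rw [psi', hrat, hlogb]
  linarith

lemma continuousOn_psi : ContinuousOn psi (Icc (4 / 5 : ℝ) 1) := by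
  have hpsi : psi = fun y => (1 + y) ^ 2 / 2 * log ((1 + y) / 2)
      - 2 * ((1 - y) / 2 * ((1 - y) / 2 * log ((1 - y) / 2))) + y * log ((3 - y ^ 2) / 2) := by
    funext y
    simp only [psi]
    ring
  have hmulLog : Continuous fun y : ℝ => (1 - y) / 2 * log ((1 - y) / 2) :=
    continuous_mul_log.comp (by fun_prop)
  rw [hpsi]
  refine ContinuousOn.add (ContinuousOn.sub ?_ (by fun_prop)) ?_
  · refine ContinuousOn.mul (by fun_prop) (ContinuousOn.log (by fun_prop) fun y hy => ?_)
    linarith [hy.1]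
  · refine ContinuousOn.mul (by fun_prop) (ContinuousOn.log (by fun_prop) fun y hy => ?_)
    nlinarith [hy.1, hy.2]

lemma psi_nonneg (hy : y ∈ Icc (0 : ℝ) 1) : 0 ≤ psi y := by
  have hanti : AntitoneOn psi (Icc (4 / 5) 1) :=
    antitoneOn_Icc_of_hasDerivAt continuousOn_psi
      (fun t ht => hasDerivAt_psi ⟨by linarith [ht.1], ht.2⟩) fun t ht => psi'_nonpos ht
  have hpsi1 : psi 1 = 0 := by norm_num [psi]
  have h45 : 0 ≤ psi (4 / 5) := by
    have := hanti (left_mem_Icc.2 (by norm_num)) (right_mem_Icc.2 (by norm_num)) (by norm_num)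
    rwa [hpsi1] at this
  rcases le_or_gt y (4 / 5) with hy45 | hy45
  · have hIoo : ∀ t ∈ Icc (0 : ℝ) (4 / 5), t ∈ Ioo (-1 : ℝ) 1 :=
      fun t ht => ⟨by linarith [ht.1], by linarith [ht.2]⟩
    have hconc : ConcaveOn ℝ (Icc 0 (4 / 5)) psi :=
      concaveOn_Icc_of_hasDerivAt
        (fun t ht => (hasDerivAt_psi (hIoo t ht)).continuousAt.continuousWithinAt)
        (fun t ht => hasDerivAt_psi (hIoo t (Ioo_subset_Icc_self ht)))
        (fun t ht => hasDerivAt_psi' (hIoo t (Ioo_subset_Icc_self ht)))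
        fun t ht => psi''_nonpos (Ioo_subset_Icc_self ht)
    have := hconc.min_le_of_mem_Icc (left_mem_Icc.2 (by norm_num)) (right_mem_Icc.2 (by norm_num))
      ⟨hy.1, hy45⟩
    rwa [show psi 0 = 0 by norm_num [psi], min_eq_left h45] at this
  · have := hanti ⟨hy45.le, hy.2⟩ (right_mem_Icc.2 (by norm_num)) hy.2
    rwa [hpsi1] at this

end Psi

theorem h_strictConcave_and_decreasing {x : ℝ} (hx : x ∈ Set.Ioo (0:ℝ) 1) :
    StrictConcaveOn ℝ (Set.Icc (0:ℝ) 2)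
      (fun p : ℝ => ((1 + x) / 2) ^ (2 - p) - ((1 - x) / 2) ^ (2 - p)
        + x * ((3 - x ^ 2) / 2) ^ (-p / 2)) ∧
    StrictAntiOn
      (fun p : ℝ => ((1 + x) / 2) ^ (2 - p) - ((1 - x) / 2) ^ (2 - p)
        + x * ((3 - x ^ 2) / 2) ^ (-p / 2)) (Set.Icc (0:ℝ) 2) := by
  obtain ⟨hx0, hx1⟩ := hx
  have ha : 0 < (1 + x) / 2 := by linarith
  have hb : 0 < (1 - x) / 2 := by linarith
  have hc : 1 ≤ (3 - x ^ 2) / 2 := by nlinarith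
  have hF : (fun p : ℝ => ((1 + x) / 2) ^ (2 - p) - ((1 - x) / 2) ^ (2 - p)
      + x * ((3 - x ^ 2) / 2) ^ (-p / 2))
      = expSum ((1 + x) / 2) ((1 - x) / 2) ((3 - x ^ 2) / 2) 1 1 x := by
    funext p
    simp only [expSum, one_mul]
  have hkey := log_sq_mul_sq_add_lt hx0 hx1
  have hpsi := psi_nonneg ⟨hx0.le, hx1.le⟩
  rw [hF]
  refine strictConcaveOn_and_strictAntiOn_Icc_of_hasDerivAt
    (hasDerivAt_expSum ha hb (by linarith)) (hasDerivAt_expSum ha hb (by linarith))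
    (fun p hp => expSum_neg hb (by linarith) (by linarith) hc (by nlinarith) (by nlinarith)
      hp.1.le (by linarith)) ?_
  rw [expSum_zero]
  rw [psi] at hpsi
  linarith
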